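/- arXiv:2510.04698 — 4 statements merged into one kernel-verified Lean document; each statement's English description precedes it below -/
import Mathlib

section
/- Let f, F : ℝ → ℝ, let p ∈ ℝ, and let n > 0 be a real number. Suppose F is differentiable at p with F'(p) = f(p), and 0 < F(p) < 1. Define θ(x) = sin²((π/2)·F(x)). Then θ is differentiable at p and n·θ'(p)² / (θ(p)·(1 − θ(p))) = n·π²·f(p)². -/
open Real

/-!
Writing `θ = sin² ∘ g` with `g = (π/2) F`, the double-angle formula gives both
`θ' = sin (2g) g'` and `θ (1 - θ) = sin² g cos² g = sin² (2g) / 4`, so the Fisher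
information `θ'² / (θ (1 - θ))` is `4 g'² = π² f²` as soon as `sin (2 g p) ≠ 0`,
which holds because `0 < π F p < π`.
-/

theorem hasDerivAt_sin_sq {g : ℝ → ℝ} {g' p : ℝ} (hg : HasDerivAt g g' p) :
    HasDerivAt (fun x => sin (g x) ^ 2) (sin (2 * g p) * g') p := by
  refine (hg.sin.pow 2).congr_deriv ?_
  rw [sin_two_mul]
  ring

theorem sin_sq_mul_one_sub_sin_sq (a : ℝ) :
    sin a ^ 2 * (1 - sin a ^ 2) = sin (2 * a) ^ 2 / 4 := by
  rw [sin_two_mul, ← cos_sq']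
  ring

theorem deriv_sin_sq_sq_div_of_hasDerivAt {g : ℝ → ℝ} {g' p : ℝ} (hg : HasDerivAt g g' p)
    (hp : sin (2 * g p) ≠ 0) :
    deriv (fun x => sin (g x) ^ 2) p ^ 2 / (sin (g p) ^ 2 * (1 - sin (g p) ^ 2)) =
      4 * g' ^ 2 := by
  rw [(hasDerivAt_sin_sq hg).deriv, sin_sq_mul_one_sub_sin_sq]
  field_simp

theorem stmt0_general (f F : ℝ → ℝ) (p n : ℝ)
    (hF : HasDerivAt F (f p) p) (h0 : 0 < F p) (h1 : F p < 1) :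
    DifferentiableAt ℝ (fun x => Real.sin (π / 2 * F x) ^ 2) p ∧
      n * (deriv (fun x => Real.sin (π / 2 * F x) ^ 2) p) ^ 2 /
          ((Real.sin (π / 2 * F p) ^ 2) * (1 - Real.sin (π / 2 * F p) ^ 2)) =
        n * π ^ 2 * (f p) ^ 2 := by
  have hg : HasDerivAt (fun x => π / 2 * F x) (π / 2 * f p) p := hF.const_mul _
  have hsin : sin (2 * (π / 2 * F p)) ≠ 0 := by
    rw [← mul_assoc, mul_div_cancel₀ π two_ne_zero]
    exact (sin_pos_of_pos_of_lt_pi (by positivity) (by nlinarith [pi_pos])).ne'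
  refine ⟨(hasDerivAt_sin_sq hg).differentiableAt, ?_⟩
  rw [mul_div_assoc, deriv_sin_sq_sq_div_of_hasDerivAt hg hsin]
  ring

/-- Fisher information of the Heng–Woodford efficient code: with encoding
probability `θ x = sin² ((π/2) F x)` where `F` has derivative `f p` at `p` and
`0 < F p < 1`, the binomial Fisher information `n θ'(p)² / (θ(p)(1-θ(p)))`
equals `n π² f(p)²`. -/
theorem stmt0 (f F : ℝ → ℝ) (p n : ℝ) (hn : 0 < n)
    (hF : HasDerivAt F (f p) p) (h0 : 0 < F p) (h1 : F p < 1) :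
    DifferentiableAt ℝ (fun x => Real.sin (π / 2 * F x) ^ 2) p ∧
      n * (deriv (fun x => Real.sin (π / 2 * F x) ^ 2) p) ^ 2 /
          ((Real.sin (π / 2 * F p) ^ 2) * (1 - Real.sin (π / 2 * F p) ^ 2)) =
        n * π ^ 2 * (f p) ^ 2 :=
  stmt0_general f F p n hF h0 h1
end

section
/- Let s(x) = 1/(1 + exp(−x)) be the logistic function. There exists a constant C > 0 such that for every c ∈ ℝ and every σ > 0: | ∫ s(c + x) dN(0, σ²)(x) − s(c) − (σ²/2)·s(c)·(1 − s(c))·(1 − 2·s(c)) | ≤ C·σ⁴. -/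
/-!
Since `s' = s (1 - s)`, every derivative of `s` is a polynomial in `s`; in particular
`s'' = s (1 - s) (1 - 2 s)` and `|s⁽⁴⁾| ≤ 1/4`. Taylor's formula to order three therefore gives
`|s (c + x) - T(x)| ≤ x⁴ / 4` for the cubic Taylor polynomial `T` of `s` at `c`. Under `N(0, σ²)`
the odd moments vanish, the second is `σ²` and the fourth is `3 σ⁴` (derivatives at `0` of the
moment generating function `exp (σ² t² / 2)`), so `∫ T = s(c) + (σ²/2) s''(c)` and the error is
at most `3 σ⁴ / 4`.
-/

open MeasureTheory ProbabilityTheory Polynomial Finset Real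
open scoped Nat NNReal

theorem abs_le_mul_abs_pow_succ_of_hasDerivAt {f f' : ℝ → ℝ} {K : ℝ} {n : ℕ}
    (hf : ∀ t, HasDerivAt f (f' t) t) (h0 : f 0 = 0) (hf' : ∀ t, |f' t| ≤ K * |t| ^ n)
    (x : ℝ) : |f x| ≤ K * |x| ^ (n + 1) := by
  have hK : 0 ≤ K := by simpa using (abs_nonneg _).trans (hf' 1)
  have hbound : ∀ t ∈ Set.uIcc 0 x, ‖f' t‖ ≤ K * |x| ^ n := fun t ht => by
    have : |t| ≤ |x| := by simpa using Set.abs_sub_left_of_mem_uIcc ht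
    exact (hf' t).trans (by gcongr)
  have := Convex.norm_image_sub_le_of_norm_hasDerivWithin_le
    (fun t _ => (hf t).hasDerivWithinAt) hbound (convex_uIcc 0 x)
    Set.left_mem_uIcc Set.right_mem_uIcc
  simpa [h0, pow_succ, mul_assoc] using this

theorem hasDerivAt_pow_succ_div_factorial (k : ℕ) (y : ℝ) :
    HasDerivAt (fun y : ℝ => y ^ (k + 1) / (k + 1)!) (y ^ k / k !) y := by
  refine ((hasDerivAt_pow (k + 1) y).div_const _).congr_deriv ?_
  rw [Nat.factorial_succ, Nat.add_sub_cancel]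
  push_cast
  field_simp

/-- The derivative of the remainder of order `n + 1` of `f` is the remainder of order `n` of
`deriv f`, so the mean value theorem gives the bound by induction on `n`. -/
theorem abs_taylor_remainder_le {n : ℕ} {f : ℝ → ℝ} (hf : ContDiff ℝ n f) {M : ℝ}
    (hM : ∀ t, |iteratedDeriv n f t| ≤ M) (c x : ℝ) :
    |f (c + x) - ∑ k ∈ range n, iteratedDeriv k f c * x ^ k / k !| ≤ M * |x| ^ n := by
  induction n generalizing f x with
  | zero => simpa using hM (c + x)
  | succ n ih =>
    obtain ⟨hdiff, -, hf'⟩ := contDiff_succ_iff_deriv.mp (by simpa using hf)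
    have hM' : ∀ t, |iteratedDeriv n (deriv f) t| ≤ M := by
      simpa only [← iteratedDeriv_succ'] using hM
    have hderiv : ∀ y, HasDerivAt
        (fun y => f (c + y) - ∑ k ∈ range (n + 1), iteratedDeriv k f c * y ^ k / k !)
        (deriv f (c + y) - ∑ k ∈ range n, iteratedDeriv k (deriv f) c * y ^ k / k !) y := by
      intro y
      have hterm : ∀ k ∈ range n, HasDerivAt
          (fun y => iteratedDeriv k (deriv f) c * (y ^ (k + 1) / (k + 1)!))
          (iteratedDeriv k (deriv f) c * (y ^ k / k !)) y :=
        fun k _ => (hasDerivAt_pow_succ_div_factorial k y).const_mul _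
      have hsum := (HasDerivAt.fun_sum hterm).const_add (f c)
      have hshift := (hdiff (c + y)).hasDerivAt.comp_const_add c y
      simpa only [sum_range_succ', iteratedDeriv_succ', pow_zero, Nat.factorial_zero,
        Nat.cast_one, div_one, mul_one, iteratedDeriv_zero, mul_div_assoc, add_comm]
        using hshift.fun_sub hsum
    refine abs_le_mul_abs_pow_succ_of_hasDerivAt hderiv ?_ (ih hf' hM') x
    simp [sum_range_succ']

noncomputable def autonomousDerivPoly (r : ℝ[X]) : ℕ → ℝ[X]
  | 0 => X
  | n + 1 => derivative (autonomousDerivPoly r n) * r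

theorem iteratedDeriv_eq_eval_autonomousDerivPoly {g : ℝ → ℝ} {r : ℝ[X]}
    (hg : ∀ x, HasDerivAt g (r.eval (g x)) x) (n : ℕ) :
    iteratedDeriv n g = fun x => (autonomousDerivPoly r n).eval (g x) := by
  induction n with
  | zero => ext; simp [autonomousDerivPoly]
  | succ n ih =>
    ext x
    rw [iteratedDeriv_succ, ih]
    exact (((autonomousDerivPoly r n).hasDerivAt (g x)).comp x (hg x)).deriv.trans
      (by simp [autonomousDerivPoly])

theorem iteratedDeriv_sigmoid (n : ℕ) :
    iteratedDeriv n sigmoid = fun x => (autonomousDerivPoly (X * (1 - X)) n).eval (sigmoid x) :=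
  iteratedDeriv_eq_eval_autonomousDerivPoly (fun x => by simpa using hasDerivAt_sigmoid x) n

theorem iteratedDeriv_two_sigmoid (x : ℝ) :
    iteratedDeriv 2 sigmoid x = sigmoid x * (1 - sigmoid x) * (1 - 2 * sigmoid x) := by
  simp [iteratedDeriv_sigmoid, autonomousDerivPoly]
  ring

theorem abs_iteratedDeriv_four_sigmoid_le (x : ℝ) : |iteratedDeriv 4 sigmoid x| ≤ 1 / 4 := by
  have h : iteratedDeriv 4 sigmoid x = sigmoid x * (1 - sigmoid x) *
      (1 - 14 * sigmoid x + 36 * sigmoid x ^ 2 - 24 * sigmoid x ^ 3) := by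
    simp [iteratedDeriv_sigmoid, autonomousDerivPoly]
    ring
  have h0 := sigmoid_nonneg x
  have h1 := sigmoid_le_one x
  set s := sigmoid x
  have hs : |s * (1 - s)| ≤ 1 / 4 := by
    rw [abs_le]
    constructor <;> nlinarith [sq_nonneg (s - 1 / 2)]
  -- for the cubic `p` below, `1 + p(s) = 2 (1 - s) (12 (s - 1/4)² + 1/4)`
  -- and `1 - p(s) = 2 s (12 (s - 3/4)² + 1/4)`
  have hp : |1 - 14 * s + 36 * s ^ 2 - 24 * s ^ 3| ≤ 1 := by
    rw [abs_le]
    constructor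
    · nlinarith [mul_nonneg (sub_nonneg.2 h1) (sq_nonneg (s - 1 / 4))]
    · nlinarith [mul_nonneg h0 (sq_nonneg (s - 3 / 4))]
  rw [h, abs_mul]
  nlinarith [abs_nonneg (s * (1 - s)), abs_nonneg (1 - 14 * s + 36 * s ^ 2 - 24 * s ^ 3)]

noncomputable def gaussianMGFDerivPoly (v : ℝ) : ℕ → ℝ[X]
  | 0 => 1
  | n + 1 => derivative (gaussianMGFDerivPoly v n) + C v * X * gaussianMGFDerivPoly v n

theorem iteratedDeriv_exp_mul_sq_div_two (v : ℝ) (n : ℕ) :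
    iteratedDeriv n (fun t => exp (v * t ^ 2 / 2)) =
      fun t => (gaussianMGFDerivPoly v n).eval t * exp (v * t ^ 2 / 2) := by
  induction n with
  | zero => ext; simp [gaussianMGFDerivPoly]
  | succ n ih =>
    ext t
    have he : HasDerivAt (fun t => exp (v * t ^ 2 / 2)) (v * t * exp (v * t ^ 2 / 2)) t := by
      refine ((((hasDerivAt_pow 2 t).const_mul v).div_const 2).exp).congr_deriv ?_
      ring
    rw [iteratedDeriv_succ, ih]
    exact (((gaussianMGFDerivPoly v n).hasDerivAt t).mul he).deriv.trans
      (by simp [gaussianMGFDerivPoly]; ring)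

theorem integral_pow_gaussianReal (v : ℝ≥0) (n : ℕ) :
    ∫ x, x ^ n ∂gaussianReal 0 v = (gaussianMGFDerivPoly v n).eval 0 := by
  have := iteratedDeriv_mgf_zero (X := fun x => x) (μ := gaussianReal 0 v) (by simp) n
  simp only [mgf_fun_id_gaussianReal, zero_mul, zero_add, iteratedDeriv_exp_mul_sq_div_two] at this
  simpa using this.symm

theorem integral_pow_four_gaussianReal (v : ℝ≥0) :
    ∫ x, x ^ 4 ∂gaussianReal 0 v = 3 * (v : ℝ) ^ 2 := by
  simp [integral_pow_gaussianReal, gaussianMGFDerivPoly]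
  ring

theorem integrable_pow_gaussianReal (v : ℝ≥0) (k : ℕ) :
    Integrable (fun x : ℝ => x ^ k) (gaussianReal 0 v) :=
  integrable_pow_of_mem_interior_integrableExpSet (X := id) (by simp) k

theorem integral_taylor_gaussianReal (v : ℝ≥0) (a : ℕ → ℝ) (n : ℕ) :
    ∫ x, (∑ k ∈ range n, a k * x ^ k / k !) ∂gaussianReal 0 v =
      ∑ k ∈ range n, a k * (gaussianMGFDerivPoly v k).eval 0 / k ! := by
  rw [integral_finsetSum _ fun k _ =>
    ((integrable_pow_gaussianReal v k).const_mul (a k)).div_const _]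
  refine sum_congr rfl fun k _ => ?_
  rw [integral_div, integral_const_mul, integral_pow_gaussianReal]

theorem integral_taylor_four_gaussianReal (v : ℝ≥0) (a : ℕ → ℝ) :
    ∫ x, (∑ k ∈ range 4, a k * x ^ k / k !) ∂gaussianReal 0 v = a 0 + v / 2 * a 2 := by
  rw [integral_taylor_gaussianReal]
  simp [sum_range_succ, gaussianMGFDerivPoly]
  ring

/-- Second-order σ-expansion of the Gaussian smoothing of the logistic
function `s(x) = 1/(1 + exp (-x))`: there is a constant `C > 0` such that for
all `c` and `σ > 0`,
`|∫ s(c+x) dN(0,σ²)(x) - s(c) - (σ²/2) s(c)(1-s(c))(1-2s(c))| ≤ C σ⁴`. -/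
theorem stmt9 :
    ∃ C : ℝ, 0 < C ∧
      ∀ c : ℝ, ∀ σ : ℝ, 0 < σ →
        |(∫ x, 1 / (1 + Real.exp (-(c + x)))
              ∂(gaussianReal 0 ((σ ^ 2).toNNReal))) -
            1 / (1 + Real.exp (-c)) -
            σ ^ 2 / 2 * ((1 / (1 + Real.exp (-c))) *
              (1 - 1 / (1 + Real.exp (-c))) *
              (1 - 2 * (1 / (1 + Real.exp (-c)))))| ≤ C * σ ^ 4 := by
  refine ⟨3 / 4, by norm_num, fun c σ _ => ?_⟩
  simp only [one_div, ← sigmoid_def]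
  set v := (σ ^ 2).toNNReal
  have hv : (v : ℝ) = σ ^ 2 := Real.coe_toNNReal _ (by positivity)
  set T := fun x : ℝ => (∑ k ∈ range 4, iteratedDeriv k sigmoid c * x ^ k / k !)
  have hT : Integrable T (gaussianReal 0 v) :=
    integrable_finsetSum _ fun k _ => ((integrable_pow_gaussianReal v k).const_mul _).div_const _
  have hs : Integrable (fun x => sigmoid (c + x)) (gaussianReal 0 v) :=
    .of_bound (by fun_prop) 1 (.of_forall fun x => by
      simpa [abs_of_pos (sigmoid_pos _)] using sigmoid_le_one _)
  have hremainder (x : ℝ) : |sigmoid (c + x) - T x| ≤ 1 / 4 * x ^ 4 := by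
    rw [← Even.pow_abs ⟨2, rfl⟩]
    exact abs_taylor_remainder_le (contDiff_sigmoid.of_le le_top)
      abs_iteratedDeriv_four_sigmoid_le c x
  calc _ = |∫ x, (sigmoid (c + x) - T x) ∂gaussianReal 0 v| := by
        rw [integral_sub hs hT, integral_taylor_four_gaussianReal, hv, iteratedDeriv_zero,
          iteratedDeriv_two_sigmoid]
        ring_nf
    _ ≤ ∫ x, 1 / 4 * x ^ 4 ∂gaussianReal 0 v :=
        norm_integral_le_of_norm_le ((integrable_pow_gaussianReal v 4).const_mul _)
          (.of_forall fun x => (Real.norm_eq_abs _).trans_le (hremainder x))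
    _ = 3 / 4 * σ ^ 4 := by
        rw [integral_const_mul, integral_pow_four_gaussianReal, hv]
        ring
end

section
/- Let Λ₀ ∈ ℝ and σ_B > 0, let λ(p) = log(p/(1−p)) and s(x) = 1/(1+exp(−x)), and set V_p = p·(1−p). Then there exists a differentiable function h : (0,1) → ℝ with h'(p) = Λ₀ − λ(p) for all p, and for any such h the function P(p) = exp(h(p)) attains a strict global maximum at the unique point p₀ = s(Λ₀) (so P is unimodal); moreover, under the identifications κ = σ_B² and σ² = 4·σ_B², for every p ∈ (0,1) the leading-order BLO bias terms equal the leading-order Bayesian bias terms: κ·p·(1−p)·V_p·(Λ₀ − λ(p)) + (σ²/2)·p·(1−p)·(1−2p) = σ_B²·p²·(1−p)²·(log P)'(p) + 2·σ_B²·p·(1−p)·(1−2p). -/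
/-!
An antiderivative of `Λ₀ - λ` on `(0,1)` is `p ↦ Λ₀ p + H(p)`, with `H` the binary entropy.
Since `λ` is an increasing bijection `(0,1) → ℝ` with inverse `s`, the derivative `Λ₀ - λ` is
positive left of `s(Λ₀)` and negative right of it, which gives the strict maximum. As
`(log ∘ exp ∘ h)' = h' = Λ₀ - λ`, the two bias expressions then agree term by term.
-/

/-- The log-odds function `λ(p) = log (p/(1-p))`. -/
noncomputable def logOdds (p : ℝ) : ℝ := Real.log (p / (1 - p))

/-- The logistic function `s(x) = 1/(1 + exp (-x))`. -/
noncomputable def logistic (x : ℝ) : ℝ := 1 / (1 + Real.exp (-x))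

open Set Real

theorem apply_lt_apply_of_hasDerivAt_pos_of_neg {f f' : ℝ → ℝ} {a b c x : ℝ}
    (hf : ∀ y ∈ Ioo a b, HasDerivAt f (f' y) y) (hc : c ∈ Ioo a b)
    (hpos : ∀ y ∈ Ioo a c, 0 < f' y) (hneg : ∀ y ∈ Ioo c b, f' y < 0)
    (hx : x ∈ Ioo a b) (hxc : x ≠ c) : f x < f c := by
  rcases hxc.lt_or_gt with hlt | hgt
  · have hmono : StrictMonoOn f (Ioc a c) :=
      strictMonoOn_of_hasDerivWithinAt_pos (convex_Ioc a c)
        (fun y hy ↦ (hf y ⟨hy.1, hy.2.trans_lt hc.2⟩).continuousAt.continuousWithinAt)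
        (by
          rw [interior_Ioc]
          exact fun y hy ↦ (hf y ⟨hy.1, hy.2.trans hc.2⟩).hasDerivWithinAt)
        (by rwa [interior_Ioc])
    exact hmono ⟨hx.1, hlt.le⟩ ⟨hc.1, le_rfl⟩ hlt
  · have hanti : StrictAntiOn f (Ico c b) :=
      strictAntiOn_of_hasDerivWithinAt_neg (convex_Ico c b)
        (fun y hy ↦ (hf y ⟨hc.1.trans_le hy.1, hy.2⟩).continuousAt.continuousWithinAt)
        (by
          rw [interior_Ico]
          exact fun y hy ↦ (hf y ⟨hc.1.trans hy.1, hy.2⟩).hasDerivWithinAt)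
        (by rwa [interior_Ico])
    exact hanti ⟨le_rfl, hc.2⟩ ⟨hgt.le, hx.2⟩ hgt

theorem logistic_eq_sigmoid : logistic = sigmoid := by
  funext x
  rw [logistic, sigmoid_def, one_div]

theorem logistic_mem_Ioo (x : ℝ) : logistic x ∈ Ioo (0 : ℝ) 1 := by
  rw [logistic_eq_sigmoid]
  exact ⟨sigmoid_pos x, sigmoid_lt_one x⟩

theorem logistic_logOdds {p : ℝ} (hp : p ∈ Ioo (0 : ℝ) 1) : logistic (logOdds p) = p := by
  obtain ⟨hp₀, hp₁⟩ := hp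
  have hq : 0 < 1 - p := sub_pos.2 hp₁
  rw [logistic, logOdds, exp_neg, exp_log (div_pos hp₀ hq)]
  field_simp
  ring

theorem logOdds_lt_iff {p x : ℝ} (hp : p ∈ Ioo (0 : ℝ) 1) :
    logOdds p < x ↔ p < logistic x := by
  rw [logistic_eq_sigmoid, ← sigmoid_lt_iff, ← logistic_eq_sigmoid, logistic_logOdds hp]

theorem lt_logOdds_iff {p x : ℝ} (hp : p ∈ Ioo (0 : ℝ) 1) :
    x < logOdds p ↔ logistic x < p := by
  rw [logistic_eq_sigmoid, ← sigmoid_lt_iff, ← logistic_eq_sigmoid, logistic_logOdds hp]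

theorem hasDerivAt_binEntropy_of_mem_Ioo {p : ℝ} (hp : p ∈ Ioo (0 : ℝ) 1) :
    HasDerivAt binEntropy (-logOdds p) p := by
  convert hasDerivAt_binEntropy hp.1.ne' hp.2.ne using 1
  rw [logOdds, log_div hp.1.ne' (sub_pos.2 hp.2).ne']
  ring

theorem hasDerivAt_const_mul_add_binEntropy (c : ℝ) {p : ℝ} (hp : p ∈ Ioo (0 : ℝ) 1) :
    HasDerivAt (fun q ↦ c * q + binEntropy q) (c - logOdds p) p :=
  (((hasDerivAt_id' p).const_mul c).add (hasDerivAt_binEntropy_of_mem_Ioo hp)).congr_deriv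
    (by ring)

theorem stmt14_general (Λ₀ σB : ℝ) :
    (∃ h : ℝ → ℝ, ∀ p ∈ Set.Ioo (0 : ℝ) 1, HasDerivAt h (Λ₀ - logOdds p) p) ∧
      ∀ h : ℝ → ℝ,
        (∀ p ∈ Set.Ioo (0 : ℝ) 1, HasDerivAt h (Λ₀ - logOdds p) p) →
          (logistic Λ₀ ∈ Set.Ioo (0 : ℝ) 1 ∧
            (∀ p ∈ Set.Ioo (0 : ℝ) 1, p ≠ logistic Λ₀ →
              Real.exp (h p) < Real.exp (h (logistic Λ₀))) ∧
            ∀ p ∈ Set.Ioo (0 : ℝ) 1,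
              σB ^ 2 * (p * (1 - p)) * (p * (1 - p)) * (Λ₀ - logOdds p) +
                  (4 * σB ^ 2) / 2 * (p * (1 - p)) * (1 - 2 * p) =
                σB ^ 2 * p ^ 2 * (1 - p) ^ 2 *
                    deriv (fun q => Real.log (Real.exp (h q))) p +
                  2 * σB ^ 2 * p * (1 - p) * (1 - 2 * p)) := by
  have hp₀ := logistic_mem_Ioo Λ₀
  refine ⟨⟨_, fun p hp ↦ hasDerivAt_const_mul_add_binEntropy Λ₀ hp⟩,
    fun h hh ↦ ⟨hp₀, fun p hp hne ↦ ?_, fun p hp ↦ ?_⟩⟩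
  · rw [exp_lt_exp]
    refine apply_lt_apply_of_hasDerivAt_pos_of_neg hh hp₀ (fun y hy ↦ ?_) (fun y hy ↦ ?_)
      hp hne
    · exact sub_pos.2 ((logOdds_lt_iff ⟨hy.1, hy.2.trans hp₀.2⟩).2 hy.2)
    · exact sub_neg.2 ((lt_logOdds_iff ⟨hp₀.1.trans hy.1, hy.2⟩).2 hy.1)
  · simp only [log_exp]
    rw [(hh p hp).deriv]
    ring

/-- Leading-order coincidence of the untruncated BLO model with a Bayesian
model with unbounded log-odds encoding and a specific unimodal prior: there is
a differentiable `h` with `h'(p) = Λ₀ - λ(p)` on `(0,1)`; for any such `h`,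
the prior shape `P(p) = exp (h p)` attains a strict global maximum at the
unique point `p₀ = s(Λ₀)`; and under the identifications `κ = σ_B²`,
`σ² = 4 σ_B²`, the leading-order BLO bias terms equal the leading-order
Bayesian bias terms at every `p ∈ (0,1)`. -/
theorem stmt14 (Λ₀ σB : ℝ) (hσB : 0 < σB) :
    (∃ h : ℝ → ℝ, ∀ p ∈ Set.Ioo (0 : ℝ) 1, HasDerivAt h (Λ₀ - logOdds p) p) ∧
      ∀ h : ℝ → ℝ,
        (∀ p ∈ Set.Ioo (0 : ℝ) 1, HasDerivAt h (Λ₀ - logOdds p) p) →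
          (logistic Λ₀ ∈ Set.Ioo (0 : ℝ) 1 ∧
            (∀ p ∈ Set.Ioo (0 : ℝ) 1, p ≠ logistic Λ₀ →
              Real.exp (h p) < Real.exp (h (logistic Λ₀))) ∧
            ∀ p ∈ Set.Ioo (0 : ℝ) 1,
              σB ^ 2 * (p * (1 - p)) * (p * (1 - p)) * (Λ₀ - logOdds p) +
                  (4 * σB ^ 2) / 2 * (p * (1 - p)) * (1 - 2 * p) =
                σB ^ 2 * p ^ 2 * (1 - p) ^ 2 *
                    deriv (fun q => Real.log (Real.exp (h q))) p +
                  2 * σB ^ 2 * p * (1 - p) * (1 - 2 * p)) :=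
  stmt14_general Λ₀ σB
end

section
/- Let μ ∈ ℝ and σ > 0, let s(x) = 1/(1 + exp(−x)) be the logistic function and λ(p) = log(p/(1−p)) its inverse on (0,1). Then the pushforward of the Gaussian measure N(μ, σ²) under s equals the measure on ℝ having density f(p) = (indicator of 0 < p < 1) · (1/(p·(1−p))) · (1/√(2πσ²)) · exp(−(λ(p) − μ)²/(2σ²)) with respect to Lebesgue measure. -/
open MeasureTheory ProbabilityTheory
open scoped ENNReal

/-!
The logistic function `s` is a smooth bijection `ℝ → (0,1)` with `s' = s (1 - s)` and inverse
`λ(p) = log (p / (1 - p))`. By the one-dimensional change of variables formula, pushing a density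
`ρ` forward along such a map gives the density `ρ(λ p) / s'(λ p)` on the range `(0,1)` and `0`
outside. As `s'(λ p) = p (1 - p)`, for the Gaussian `ρ` this is `f`.
-/

open Set Function in
theorem map_withDensity_abs_deriv_mul_eq_withDensity_indicator {f f' : ℝ → ℝ} {h : ℝ → ℝ≥0∞}
    (hf' : ∀ x, HasDerivAt f (f' x) x) (hf : Injective f) :
    (volume.withDensity fun x => ENNReal.ofReal |f' x| * h (f x)).map f =
      volume.withDensity ((range f).indicator h) := by
  have hemb : MeasurableEmbedding f :=
    (continuous_iff_continuousAt.2 fun x => (hf' x).continuousAt).measurableEmbedding hf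
  ext A hA
  have hpre : MeasurableSet (f ⁻¹' A) := hemb.measurable hA
  rw [Measure.map_apply hemb.measurable hA, withDensity_apply _ hpre, withDensity_apply _ hA,
    setLIntegral_indicator hemb.measurableSet_range, inter_comm, ← image_preimage_eq_inter_range,
    lintegral_image_eq_lintegral_abs_deriv_mul hpre (fun x _ => (hf' x).hasDerivWithinAt)
      hf.injOn]

namespace Real

lemma log_sigmoid_div_one_sub_sigmoid (x : ℝ) : log (sigmoid x / (1 - sigmoid x)) = x := by
  have hx : sigmoid x / (1 - sigmoid x) = exp x := by
    rw [← sigmoid_neg, ← sigmoid_mul_rexp_neg, exp_neg, div_mul_eq_div_div, div_self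
      (sigmoid_pos x).ne', one_div, inv_inv]
  rw [hx, log_exp]

lemma sigmoid_mul_one_sub_sigmoid_pos (x : ℝ) : 0 < sigmoid x * (1 - sigmoid x) :=
  mul_pos (sigmoid_pos x) (sub_pos.2 (sigmoid_lt_one x))

lemma gaussianPDFReal_eq_sigmoid_deriv_mul (μ σ x : ℝ) :
    gaussianPDFReal μ (σ ^ 2).toNNReal x =
      sigmoid x * (1 - sigmoid x) *
        (1 / (sigmoid x * (1 - sigmoid x)) * (1 / √(2 * π * σ ^ 2)) *
          exp (-(log (sigmoid x / (1 - sigmoid x)) - μ) ^ 2 / (2 * σ ^ 2))) := by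
  rw [gaussianPDFReal, log_sigmoid_div_one_sub_sigmoid, coe_toNNReal _ (sq_nonneg σ),
    ← mul_assoc (_ * _) (_ * _), ← mul_assoc (_ * _) (1 / _),
    mul_one_div_cancel (sigmoid_mul_one_sub_sigmoid_pos x).ne', one_mul, one_div]

end Real

/-- Change of variables for the BLO response distribution: the pushforward of
the Gaussian measure `N(μ, σ²)` under the logistic function
`s(x) = 1/(1 + exp (-x))` has density
`p ↦ 1_{(0,1)}(p) · (1/(p(1-p))) · (1/√(2πσ²)) · exp (-(λ(p) - μ)²/(2σ²))`
with respect to Lebesgue measure, where `λ(p) = log (p/(1-p))`. -/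
theorem stmt16 (μ σ : ℝ) (hσ : 0 < σ) :
    Measure.map (fun x : ℝ => 1 / (1 + Real.exp (-x)))
        (gaussianReal μ ((σ ^ 2).toNNReal)) =
      volume.withDensity (fun p : ℝ =>
        ENNReal.ofReal
          (Set.indicator (Set.Ioo (0 : ℝ) 1)
            (fun p => 1 / (p * (1 - p)) * (1 / Real.sqrt (2 * Real.pi * σ ^ 2)) *
              Real.exp (-(Real.log (p / (1 - p)) - μ) ^ 2 / (2 * σ ^ 2))) p)) := by
  set density : ℝ → ℝ := fun p => 1 / (p * (1 - p)) * (1 / Real.sqrt (2 * Real.pi * σ ^ 2)) *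
    Real.exp (-(Real.log (p / (1 - p)) - μ) ^ 2 / (2 * σ ^ 2))
  have hv : (σ ^ 2).toNNReal ≠ 0 := (Real.toNNReal_pos.2 (pow_pos hσ 2)).ne'
  have hpdf : gaussianPDF μ (σ ^ 2).toNNReal = fun x =>
      ENNReal.ofReal |Real.sigmoid x * (1 - Real.sigmoid x)| *
        ENNReal.ofReal (density (Real.sigmoid x)) := by
    ext x
    have hderiv := Real.sigmoid_mul_one_sub_sigmoid_pos x
    rw [gaussianPDF, Real.gaussianPDFReal_eq_sigmoid_deriv_mul, abs_of_pos hderiv,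
      ENNReal.ofReal_mul hderiv.le]
  rw [show (fun x : ℝ => 1 / (1 + Real.exp (-x))) = Real.sigmoid from funext fun x => one_div _,
    gaussianReal_of_var_ne_zero μ hv, hpdf,
    map_withDensity_abs_deriv_mul_eq_withDensity_indicator (h := fun p => ENNReal.ofReal (density p))
      Real.hasDerivAt_sigmoid Real.sigmoid_injective, Real.range_sigmoid]
  exact congrArg _ (Set.indicator_comp_of_zero ENNReal.ofReal_zero)
end
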